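/- If f : Mₙ(ℂ)^d → ℂ is a polynomial function invariant under simultaneous conjugation by all unitary matrices, then f is invariant under simultaneous conjugation by all invertible matrices (a version of Weyl's unitarian trick). -/

import Mathlib

/-!
Every invertible matrix is `U * diagonal μ * V` with `U`, `V` unitary and `μ > 0` (singular value
decomposition), so only conjugation by `diagonal μ` needs an argument. The matrices
`D z = diagonal (exp (log μ * (z * I)))` are unitary for real `z`, and `D (-I) = diagonal μ`.
Since `f` is polynomial, `z ↦ f ((D z)⁻¹ Z (D z))` is entire; it is constant on `ℝ` by unitary
invariance, hence constant by the identity theorem, and evaluating at `-I` gives the claim.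
-/

open Matrix Complex Filter Topology
open scoped ComplexOrder

variable {ι n : Type*}

def IsPolynomialFun (f : (ι → Matrix n n ℂ) → ℂ) : Prop :=
  ∃ P : MvPolynomial (ι × n × n) ℂ, ∀ Z, f Z = MvPolynomial.eval (fun p => Z p.1 p.2.1 p.2.2) P

theorem IsPolynomialFun.analyticAt_comp {f : (ι → Matrix n n ℂ) → ℂ} (hf : IsPolynomialFun f)
    {γ : ℂ → ι → Matrix n n ℂ} {z : ℂ} (hγ : ∀ i j k, AnalyticAt ℂ (fun w => γ w i j k) z) :
    AnalyticAt ℂ (fun w => f (γ w)) z := by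
  obtain ⟨P, hP⟩ := hf
  have h := AnalyticAt.aeval_mvPolynomial (A := ℂ) (f := fun w p => γ w p.1 p.2.1 p.2.2)
    (fun p => hγ p.1 p.2.1 p.2.2) P
  simp only [hP]
  exact h

variable [Fintype n] [DecidableEq n]

def IsConjInvariant (f : (ι → Matrix n n ℂ) → ℂ) (A : Matrix n n ℂ) : Prop :=
  ∀ Z, f (fun i => A⁻¹ * Z i * A) = f Z

theorem IsConjInvariant.mul {f : (ι → Matrix n n ℂ) → ℂ} {A B : Matrix n n ℂ}
    (hA : IsConjInvariant f A) (hB : IsConjInvariant f B) : IsConjInvariant f (A * B) := by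
  intro Z
  simp only [Matrix.mul_inv_rev, mul_assoc]
  simpa only [mul_assoc] using (hB fun i => A⁻¹ * Z i * A).trans (hA Z)

theorem Matrix.diagonal_exp_mem_unitaryGroup {w : n → ℂ} (hw : ∀ j, (w j).re = 0) :
    diagonal (fun j => exp (w j)) ∈ unitaryGroup n ℂ := by
  rw [mem_unitaryGroup_iff, star_eq_conjTranspose, diagonal_conjTranspose, diagonal_mul_diagonal,
    ← diagonal_one]
  exact congrArg diagonal (funext fun j => by simp [mul_conj, normSq_eq_norm_sq, norm_exp, hw])

theorem Matrix.inv_diagonal_exp (w : n → ℂ) :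
    (diagonal fun j => exp (w j))⁻¹ = diagonal fun j => exp (-w j) :=
  inv_eq_left_inv (by simp [diagonal_mul_diagonal, ← exp_add])

theorem IsPolynomialFun.isConjInvariant_diagonal {f : (ι → Matrix n n ℂ) → ℂ}
    (hf : IsPolynomialFun f) (hunit : ∀ u ∈ unitaryGroup n ℂ, IsConjInvariant f u)
    {μ : n → ℝ} (hμ : ∀ j, 0 < μ j) : IsConjInvariant f (diagonal fun j => (μ j : ℂ)) := by
  intro Z
  let D : ℂ → Matrix n n ℂ := fun z => diagonal fun j => exp (Real.log (μ j) * (z * I))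
  let g : ℂ → ℂ := fun z => f (fun i => (D z)⁻¹ * Z i * D z)
  have hg : AnalyticOnNhd ℂ g Set.univ := fun z _ => by
    refine hf.analyticAt_comp fun i j k => ?_
    simp only [D, inv_diagonal_exp, diagonal_mul, mul_diagonal]
    fun_prop
  have hreal : ∀ t : ℝ, g t = f Z := fun t =>
    hunit _ (diagonal_exp_mem_unitaryGroup fun j => by simp) Z
  have hconst : g = fun _ => f Z := by
    refine hg.eq_of_frequently_eq analyticOnNhd_const (z₀ := 0) ?_
    have hofReal : Tendsto ofReal (𝓝[≠] 0) (𝓝[≠] 0) :=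
      continuous_ofReal.continuousWithinAt.tendsto_nhdsWithin fun _ h => by simpa using h
    exact hofReal.frequently (Frequently.of_forall hreal)
  have hD : D (-I) = diagonal fun j => (μ j : ℂ) := by
    refine congrArg diagonal (funext fun j => ?_)
    simp [← ofReal_exp, Real.exp_log (hμ j)]
  simpa [g, hD] using congrFun hconst (-I)

theorem Matrix.exists_eq_unitary_mul_diagonal_mul_unitary {s : Matrix n n ℂ} (hs : IsUnit s) :
    ∃ U ∈ unitaryGroup n ℂ, ∃ V ∈ unitaryGroup n ℂ, ∃ μ : n → ℝ, (∀ j, 0 < μ j) ∧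
      s = U * diagonal (fun j => (μ j : ℂ)) * V := by
  have hA : (sᴴ * s).PosDef := PosDef.conjTranspose_mul_self s (mulVec_injective_iff_isUnit.mpr hs)
  obtain ⟨W, hW, hspec⟩ : ∃ W ∈ unitaryGroup n ℂ,
      sᴴ * s = W * diagonal (fun j => (hA.isHermitian.eigenvalues j : ℂ)) * star W :=
    ⟨_, hA.isHermitian.eigenvectorUnitary.2, hA.isHermitian.spectral_theorem⟩
  set μ : n → ℝ := fun j => √(hA.isHermitian.eigenvalues j)
  have hμ : ∀ j, 0 < μ j := fun j => Real.sqrt_pos.2 (hA.eigenvalues_pos j)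
  set D : Matrix n n ℂ := diagonal fun j => (μ j : ℂ)
  set E : Matrix n n ℂ := diagonal fun j => ((μ j)⁻¹ : ℂ)
  have hED : E * D = 1 := by
    rw [diagonal_mul_diagonal, ← diagonal_one]
    exact congrArg diagonal (funext fun j => inv_mul_cancel₀ (by exact_mod_cast (hμ j).ne'))
  have hE : star E = E := by simp [E, star_eq_conjTranspose, diagonal_conjTranspose]
  have hWW : star W * W = 1 := mem_unitaryGroup_iff'.mp hW
  have hDD : star W * (sᴴ * s) * W = D * D := by
    rw [hspec, diagonal_mul_diagonal]
    simp only [mul_assoc, hWW, mul_one]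
    simp only [← mul_assoc, hWW, one_mul]
    refine congrArg diagonal (funext fun j => ?_)
    rw [← ofReal_mul, Real.mul_self_sqrt (hA.eigenvalues_pos j).le]
  refine ⟨s * W * E, ?_, star W, Unitary.star_mem hW, μ, hμ, ?_⟩
  · rw [mem_unitaryGroup_iff']
    calc star (s * W * E) * (s * W * E) = E * (star W * (sᴴ * s) * W) * E := by
          simp only [star_mul, hE, star_eq_conjTranspose, mul_assoc]
      _ = 1 := by rw [hDD, ← mul_assoc, hED, one_mul, mul_eq_one_comm, hED]
  · simp only [mul_assoc]
    rw [← mul_assoc E, hED, one_mul, mem_unitaryGroup_iff.mp hW, mul_one]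

theorem stmt_10 (n d : ℕ) (f : (Fin d → Matrix (Fin n) (Fin n) ℂ) → ℂ)
    (hpoly : ∃ P : MvPolynomial (Fin d × Fin n × Fin n) ℂ,
      ∀ Z : Fin d → Matrix (Fin n) (Fin n) ℂ,
        f Z = MvPolynomial.eval (fun p => Z p.1 p.2.1 p.2.2) P)
    (hunit : ∀ (u : Matrix.unitaryGroup (Fin n) ℂ) (Z : Fin d → Matrix (Fin n) (Fin n) ℂ),
      f (fun i => (↑u⁻¹ : Matrix (Fin n) (Fin n) ℂ) * Z i * (↑u : Matrix (Fin n) (Fin n) ℂ)) = f Z) :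
    ∀ (s : GL (Fin n) ℂ) (Z : Fin d → Matrix (Fin n) (Fin n) ℂ),
      f (fun i => (↑s⁻¹ : Matrix (Fin n) (Fin n) ℂ) * Z i * (↑s : Matrix (Fin n) (Fin n) ℂ)) = f Z := by
  have hunitary : ∀ u ∈ unitaryGroup (Fin n) ℂ, IsConjInvariant f u := fun u hu Z => by
    rw [inv_eq_left_inv (mem_unitaryGroup_iff'.mp hu)]
    exact hunit ⟨u, hu⟩ Z
  intro s Z
  obtain ⟨U, hU, V, hV, μ, hμ, hs⟩ := exists_eq_unitary_mul_diagonal_mul_unitary s.isUnit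
  rw [coe_units_inv, hs]
  exact ((hunitary U hU).mul (IsPolynomialFun.isConjInvariant_diagonal hpoly hunitary hμ)).mul
    (hunitary V hV) Z
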